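/- Let q = 2^m, identify GF(2^m) with F_2^m via a fixed F_2-basis, and for x ∈ GF(2^m)^N define its bit weight bw(x) as the sum over all coordinates of the Hamming weights of their binary images. Let K ≥ K_0 ≥ 1 and L ≥ 1 be integers with N = KL, and let the K_0·L labels of the strip pattern with parameters (K, K_0, L) be i.i.d. uniformly random nonzero elements of GF(2^m), giving a random L×N matrix H over GF(2^m). Then for every real ρ > 0, the expectation over the labels of Σ_{x ∈ GF(2^m)^N : Hx = 0} ρ^{bw(x)} equals f(φ(ρ))^L, where f(s) = (1/q)·[(1+(q−1)s)^{K_0} + (q−1)(1−s)^{K_0}] · (1+(q−1)s)^{K−K_0} and φ(ρ) = ((1+ρ)^m − 1)/(q−1). -/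

import Mathlib

/-- The index `i·L + t` (0-based) of the one in row `t` and occurrence `i` of the strip
pattern, as an element of `Fin (K*L)`. -/
def stripIdx (K L i t : ℕ) (hi : i < K) (ht : t < L) : Fin (K * L) :=
  ⟨i * L + t, by
    calc i * L + t < i * L + L := Nat.add_lt_add_left ht _
      _ = (i + 1) * L := by ring
      _ ≤ K * L := Nat.mul_le_mul_right L hi⟩

/-- The bit weight of a field element `a ∈ GF(2^m)` with respect to a fixed `F₂`-basis `b`:
the Hamming weight of the coordinate vector of `a`. -/
noncomputable def bitWt {F : Type*} [Field F] [Algebra (ZMod 2) F] {m : ℕ}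
    (b : Module.Basis (Fin m) (ZMod 2) F) (a : F) : ℕ :=
  (Finset.univ.filter (fun i => b.repr a i ≠ 0)).card

/-!
Reading the `N = K·L` coordinates row by row, the parity checks of distinct
rows involve disjoint coordinates and the weight `ρ^bw(x)` is multiplicative, so the sum over
labels and code words factors into `L` identical row sums. In a row, each of the `K - K₀`
unchecked coordinates contributes `∑ₐ ρ^bw(a) = (1 + ρ)^m`. For the `K₀` checked ones, pair
each label `ℓᵢ` with its coordinate `yᵢ`: the partial sums of `ℓᵢ yᵢ` form a weighted walk on
`(GF(q), +)` whose step weight `∑_{ℓ y = c} ρ^bw(y)` is the same for every `c ≠ 0`, because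
multiplication by a nonzero label permutes the nonzero elements. A walk whose step weights
are uniform apart from an excess `a` at `0` returns to `0` with total weight
`(T^n + (q - 1) a^n) / q`, `T` being the total step weight; here `T = (q - 1)(1 + ρ)^m` and
`a = q - (1 + ρ)^m`, which is `f(φ(ρ))` after normalising by the `(q - 1)^{K₀}` labels.
-/

open Finset

section HammingWeight

variable {ι β R : Type*} [Fintype ι] [DecidableEq β] [Zero β] [CommSemiring R]

lemma pow_hammingNorm (ρ : R) (x : ι → β) :
    ρ ^ hammingNorm x = ∏ i, if x i = 0 then 1 else ρ := by
  rw [prod_ite, prod_const_one, one_mul, prod_const, hammingNorm]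

lemma sum_ite_eq_zero_one [Fintype β] (ρ : R) :
    ∑ c : β, (if c = 0 then 1 else ρ) = 1 + (Fintype.card β - 1 : ℕ) * ρ := by
  rw [sum_ite, sum_const, sum_const, filter_eq', if_pos (mem_univ 0), card_singleton,
    filter_ne', card_erase_of_mem (mem_univ 0), card_univ, one_smul, nsmul_eq_mul]

lemma sum_pow_hammingNorm [DecidableEq ι] [Fintype β] (ρ : R) :
    ∑ x : ι → β, ρ ^ hammingNorm x = (1 + (Fintype.card β - 1 : ℕ) * ρ) ^ Fintype.card ι := by
  simp only [pow_hammingNorm]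
  rw [← Fintype.prod_sum (fun _ c => if c = 0 then 1 else ρ), sum_ite_eq_zero_one, prod_const,
    card_univ]

end HammingWeight

lemma bitWt_zero {F : Type*} [Field F] [Algebra (ZMod 2) F] {m : ℕ}
    (b : Module.Basis (Fin m) (ZMod 2) F) : bitWt b 0 = 0 := by
  simp [bitWt]

lemma sum_pow_bitWt {F R : Type*} [Field F] [Fintype F] [Algebra (ZMod 2) F] [CommSemiring R]
    {m : ℕ} (b : Module.Basis (Fin m) (ZMod 2) F) (ρ : R) :
    ∑ a : F, ρ ^ bitWt b a = (1 + ρ) ^ m := by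
  calc ∑ a : F, ρ ^ bitWt b a = ∑ x : Fin m → ZMod 2, ρ ^ hammingNorm x :=
        Fintype.sum_equiv b.equivFun.toEquiv _ _ fun _ => rfl
    _ = (1 + ρ) ^ m := by
      rw [sum_pow_hammingNorm, ZMod.card, Fintype.card_fin]
      norm_num

lemma Fin.sum_fin_succ_pi {X M : Type*} [Fintype X] [AddCommMonoid M] {n : ℕ}
    (f : (Fin (n + 1) → X) → M) : ∑ x, f x = ∑ a, ∑ x, f (Fin.cons a x) := by
  rw [← Fintype.sum_prod_type' (fun a x => f (Fin.cons a x))]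
  exact (Fintype.sum_equiv (Fin.consEquiv fun _ => X) _ f fun _ => rfl).symm

section RandomWalk

variable {G P R : Type*} [AddCommGroup G] [Fintype G] [DecidableEq G] [Fintype P] [CommRing R]
  {g : P → G} {v : P → R} {a β : R}

theorem card_mul_sum_ite_sum_eq_zero
    (hstep : ∀ c, ∑ p, (if g p = c then v p else 0) = (if c = 0 then a else 0) + β) (n : ℕ) :
    (Fintype.card G : R) * ∑ z : Fin n → P, (if ∑ i, g (z i) = 0 then ∏ i, v (z i) else 0)
      = (∑ p, v p) ^ n + (Fintype.card G - 1) * a ^ n := by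
  have htotal : ∑ p, v p = a + Fintype.card G * β := by
    calc ∑ p, v p = ∑ c, ∑ p, (if g p = c then v p else 0) := by
          rw [sum_comm]; simp only [sum_ite_eq, mem_univ, if_true]
      _ = a + Fintype.card G * β := by
          simp only [hstep, sum_add_distrib, sum_ite_eq', mem_univ, if_true, sum_const,
            card_univ, nsmul_eq_mul]
  induction n with
  | zero => simp
  | succ n ih =>
    have step : ∑ z : Fin (n + 1) → P, (if ∑ i, g (z i) = 0 then ∏ i, v (z i) else 0)
        = a * ∑ z : Fin n → P, (if ∑ i, g (z i) = 0 then ∏ i, v (z i) else 0)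
          + β * (∑ p, v p) ^ n := by
      rw [Fin.sum_fin_succ_pi, sum_comm, Fintype.sum_pow, mul_sum, mul_sum, ← sum_add_distrib]
      refine sum_congr rfl fun z _ => ?_
      simp only [Fin.sum_univ_succ, Fin.prod_univ_succ, Fin.cons_zero, Fin.cons_succ,
        ← eq_neg_iff_add_eq_zero, ← ite_zero_mul, ← sum_mul, hstep, neg_eq_zero]
      split_ifs <;> ring
    rw [step]
    linear_combination a * ih - (∑ p, v p) ^ n * htotal

end RandomWalk

section LabeledSums

variable {F R : Type*} [Field F] [Fintype F] [DecidableEq F] [CommRing R] (w : F → R)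

lemma card_subtype_ne_zero_cast :
    (Fintype.card {a : F // a ≠ 0} : R) = Fintype.card F - 1 := by
  rw [Fintype.card_subtype_compl, Fintype.card_subtype_eq, Nat.cast_sub Fintype.card_pos,
    Nat.cast_one]

lemma sum_ne_zero_sum_ite_mul_eq (c : F) :
    ∑ ℓ : {a : F // a ≠ 0}, ∑ y : F, (if (ℓ : F) * y = c then w y else 0)
      = if c = 0 then (Fintype.card F - 1) * w 0 else ∑ y, w y - w 0 := by
  have hsolve (ℓ : {a : F // a ≠ 0}) :
      ∑ y : F, (if (ℓ : F) * y = c then w y else 0) = w ((ℓ : F)⁻¹ * c) := by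
    simp only [← eq_inv_mul_iff_mul_eq₀ ℓ.2, sum_ite_eq', mem_univ, if_true]
  simp only [hsolve]
  split_ifs with hc
  · rw [hc]
    simp only [mul_zero, sum_const, card_univ, nsmul_eq_mul, card_subtype_ne_zero_cast]
  · let inv : {a : F // a ≠ 0} → {a : F // a ≠ 0} :=
      fun ℓ => ⟨(ℓ : F)⁻¹ * c, by simp [ℓ.2, hc]⟩
    have hinv : Function.Involutive inv := fun ℓ => by
      ext
      simp only [inv, mul_inv, inv_inv, mul_assoc, inv_mul_cancel₀ hc, mul_one]
    calc ∑ ℓ : {a : F // a ≠ 0}, w ((ℓ : F)⁻¹ * c) = ∑ y : {a : F // a ≠ 0}, w y :=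
          Fintype.sum_equiv hinv.toPerm _ _ fun _ => rfl
      _ = ∑ y, w y - w 0 := by
        rw [Fintype.sum_eq_add_sum_subtype_ne w 0, add_sub_cancel_left]

theorem card_mul_sum_labels_sum_ite_eq_zero (n : ℕ) :
    (Fintype.card F : R) * ∑ ℓ : Fin n → {a : F // a ≠ 0}, ∑ y : Fin n → F,
        (if ∑ i, (ℓ i : F) * y i = 0 then ∏ i, w (y i) else 0)
      = ((Fintype.card F - 1) * ∑ a, w a) ^ n
        + (Fintype.card F - 1) * (Fintype.card F * w 0 - ∑ a, w a) ^ n := by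
  have hstep (c : F) : ∑ p : {a : F // a ≠ 0} × F, (if (p.1 : F) * p.2 = c then w p.2 else 0)
      = (if c = 0 then Fintype.card F * w 0 - ∑ a, w a else 0) + (∑ a, w a - w 0) := by
    rw [Fintype.sum_prod_type, sum_ne_zero_sum_ite_mul_eq]
    split_ifs <;> ring
  have htotal : ∑ p : {a : F // a ≠ 0} × F, w p.2 = (Fintype.card F - 1) * ∑ a, w a := by
    rw [Fintype.sum_prod_type]
    simp only [sum_const, card_univ, nsmul_eq_mul, card_subtype_ne_zero_cast]
  rw [← htotal, ← card_mul_sum_ite_sum_eq_zero hstep n, ← Fintype.sum_prod_type']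
  congr 1
  exact Fintype.sum_equiv (Equiv.arrowProdEquivProdArrow _ _ _).symm _ _ fun _ => rfl

end LabeledSums

section Strip

def stripEquiv (K L : ℕ) : Fin L × Fin K ≃ Fin (K * L) :=
  (Equiv.prodComm _ _).trans finProdFinEquiv

lemma stripIdx_eq_stripEquiv {K L i t : ℕ} (hi : i < K) (ht : t < L) :
    stripIdx K L i t hi ht = stripEquiv K L (⟨t, ht⟩, ⟨i, hi⟩) := by
  ext
  simp only [stripIdx, stripEquiv, Equiv.trans_apply, Equiv.prodComm_apply, Prod.swap_prod_mk,
    finProdFinEquiv_apply_val]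
  ring

variable {F R : Type*} [Semiring F] [Fintype F] [DecidableEq F] [CommSemiring R]

theorem sum_labels_sum_strip_eq_pow (w : F → R) {K K₀ : ℕ} (L : ℕ) (hK : K₀ ≤ K) :
    ∑ lab : Fin L → Fin K₀ → {a : F // a ≠ 0},
        ∑ x ∈ univ.filter (fun x : Fin (K * L) → F => ∀ t : Fin L, ∑ i : Fin K₀,
          (lab t i : F) * x (stripIdx K L i.1 t.1 (lt_of_lt_of_le i.isLt hK) t.isLt) = 0),
          ∏ c, w (x c)
      = (∑ ℓ : Fin K₀ → {a : F // a ≠ 0}, ∑ v : Fin K → F,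
          if ∑ i, (ℓ i : F) * v (Fin.castLE hK i) = 0 then ∏ j, w (v j) else 0) ^ L := by
  let Φ : (Fin L → Fin K → F) ≃ (Fin (K * L) → F) :=
    (Equiv.curry _ _ _).symm.trans ((stripEquiv K L).arrowCongr (Equiv.refl F))
  have hΦ (y : Fin L → Fin K → F) (p : Fin L × Fin K) : Φ y (stripEquiv K L p) = y p.1 p.2 := by
    simp only [Φ, Equiv.trans_apply, Equiv.curry_symm_apply, Equiv.arrowCongr_apply,
      Equiv.coe_refl, Function.comp_apply, Equiv.symm_apply_apply, id_eq]
    rfl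
  have hrows (lab : Fin L → Fin K₀ → {a : F // a ≠ 0}) :
      ∑ x ∈ univ.filter (fun x : Fin (K * L) → F => ∀ t : Fin L, ∑ i : Fin K₀,
          (lab t i : F) * x (stripIdx K L i.1 t.1 (lt_of_lt_of_le i.isLt hK) t.isLt) = 0),
          ∏ c, w (x c)
        = ∏ t, ∑ v : Fin K → F,
          if ∑ i, (lab t i : F) * v (Fin.castLE hK i) = 0 then ∏ j, w (v j) else 0 := by
    rw [sum_filter, ← Equiv.sum_comp Φ, Fintype.prod_sum]
    refine sum_congr rfl fun y _ => ?_
    rw [Fintype.prod_ite_zero, ← Equiv.prod_comp (stripEquiv K L), Fintype.prod_prod_type]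
    simp only [stripIdx_eq_stripEquiv, hΦ]
    congr 1
  simp only [hrows]
  rw [Fintype.sum_pow]

theorem sum_labels_sum_castLE_eq_mul (w : F → R) {K K₀ : ℕ} (hK : K₀ ≤ K) :
    ∑ ℓ : Fin K₀ → {a : F // a ≠ 0}, ∑ v : Fin K → F,
        (if ∑ i, (ℓ i : F) * v (Fin.castLE hK i) = 0 then ∏ j, w (v j) else 0)
      = (∑ ℓ : Fin K₀ → {a : F // a ≠ 0}, ∑ u : Fin K₀ → F,
          if ∑ i, (ℓ i : F) * u i = 0 then ∏ i, w (u i) else 0) * (∑ a, w a) ^ (K - K₀) := by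
  obtain ⟨D, rfl⟩ := Nat.exists_eq_add_of_le hK
  have hcast (i : Fin K₀) : Fin.castLE hK i = Fin.castAdd D i := rfl
  rw [Nat.add_sub_cancel_left, sum_mul]
  refine sum_congr rfl fun ℓ _ => ?_
  rw [Fintype.sum_pow, sum_mul_sum, ← (Fin.appendEquiv K₀ D).sum_comp, Fintype.sum_prod_type]
  refine sum_congr rfl fun u _ => sum_congr rfl fun u' _ => ?_
  simp only [Fin.appendEquiv_apply, hcast, Fin.append_left, Fin.prod_univ_add, Fin.append_right,
    ite_zero_mul]

end Strip

theorem stmt_9_general (m : ℕ) (F : Type*) [Field F] [Fintype F] [DecidableEq F]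
    [Algebra (ZMod 2) F] (hq : Fintype.card F = 2 ^ m) (b : Module.Basis (Fin m) (ZMod 2) F)
    (K K₀ L : ℕ) (hK : K₀ ≤ K) (ρ : ℝ) :
    (∑ lab : Fin L → Fin K₀ → {a : F // a ≠ 0},
        ∑ x ∈ Finset.univ.filter
            (fun x : Fin (K * L) → F => ∀ t : Fin L, ∑ i : Fin K₀,
              (lab t i : F) *
                x (stripIdx K L i.1 t.1 (lt_of_lt_of_le i.isLt hK) t.isLt) = 0),
          ρ ^ (∑ c, bitWt b (x c))) /
      (Fintype.card (Fin L → Fin K₀ → {a : F // a ≠ 0}) : ℝ)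
      = ((1 / (2 : ℝ) ^ m) *
          ((1 + ((2 : ℝ) ^ m - 1) * (((1 + ρ) ^ m - 1) / ((2 : ℝ) ^ m - 1))) ^ K₀ +
            ((2 : ℝ) ^ m - 1) * (1 - ((1 + ρ) ^ m - 1) / ((2 : ℝ) ^ m - 1)) ^ K₀) *
          (1 + ((2 : ℝ) ^ m - 1) * (((1 + ρ) ^ m - 1) / ((2 : ℝ) ^ m - 1))) ^ (K - K₀)) ^ L
      := by
  simp only [← prod_pow_eq_pow_sum]
  rw [sum_labels_sum_strip_eq_pow (fun a => ρ ^ bitWt b a) L hK,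
    sum_labels_sum_castLE_eq_mul (fun a => ρ ^ bitWt b a), sum_pow_bitWt]
  have hrow := card_mul_sum_labels_sum_ite_eq_zero (fun a => ρ ^ bitWt b a) K₀
  simp only [bitWt_zero, pow_zero, mul_one, sum_pow_bitWt, mul_pow] at hrow
  have hcard : (Fintype.card (Fin L → Fin K₀ → {a : F // a ≠ 0}) : ℝ)
      = ((Fintype.card F - 1) ^ K₀) ^ L := by
    simp only [Fintype.card_fun, Fintype.card_fin, Nat.cast_pow, card_subtype_ne_zero_cast]
  have hq' : (2 : ℝ) ^ m = Fintype.card F := by exact_mod_cast hq.symm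
  rw [hq', hcard, ← div_pow]
  congr 1
  have hq1 : (Fintype.card F : ℝ) - 1 ≠ 0 :=
    sub_ne_zero.2 (by exact_mod_cast (Fintype.one_lt_card (α := F)).ne')
  set q : ℝ := (Fintype.card F : ℝ)
  set P : ℝ := (1 + ρ) ^ m
  have hq0 : q ≠ 0 := by positivity
  have hφ : 1 + (q - 1) * ((P - 1) / (q - 1)) = P := by field_simp; ring
  have h1φ : 1 - (P - 1) / (q - 1) = (q - P) / (q - 1) := by field_simp; ring
  rw [hφ, h1φ, div_pow]
  field_simp
  linear_combination P ^ (K - K₀) * hrow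

/-- Let `q = 2^m` and identify `GF(2^m)` with `F₂^m` via a fixed basis `b`; the bit weight
`bw(x)` of `x ∈ GF(2^m)^N` is the sum of the Hamming weights of the binary images of its
coordinates. Let `K ≥ K₀ ≥ 1`, `L ≥ 1`, `N = K·L`, and let the `K₀·L` labels of the strip
pattern be i.i.d. uniform nonzero elements of `GF(2^m)`, giving a random `L×N` matrix `H`.
Then for every real `ρ > 0`, the expectation over the labels of
`∑_{x : Hx = 0} ρ^{bw(x)}` equals `f(φ(ρ))^L`, where
`f(s) = (1/q)[(1+(q-1)s)^{K₀} + (q-1)(1-s)^{K₀}](1+(q-1)s)^{K-K₀}` and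
`φ(ρ) = ((1+ρ)^m - 1)/(q-1)`. -/
theorem stmt_9 (m : ℕ) (hm : 1 ≤ m) (F : Type*) [Field F] [Fintype F] [DecidableEq F]
    [Algebra (ZMod 2) F] (hq : Fintype.card F = 2 ^ m) (b : Module.Basis (Fin m) (ZMod 2) F)
    (K K₀ L : ℕ) (hK₀ : 1 ≤ K₀) (hK : K₀ ≤ K) (hL : 1 ≤ L) (ρ : ℝ) (hρ : 0 < ρ) :
    (∑ lab : Fin L → Fin K₀ → {a : F // a ≠ 0},
        ∑ x ∈ Finset.univ.filter
            (fun x : Fin (K * L) → F => ∀ t : Fin L, ∑ i : Fin K₀,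
              (lab t i : F) *
                x (stripIdx K L i.1 t.1 (lt_of_lt_of_le i.isLt hK) t.isLt) = 0),
          ρ ^ (∑ c, bitWt b (x c))) /
      (Fintype.card (Fin L → Fin K₀ → {a : F // a ≠ 0}) : ℝ)
      = ((1 / (2 : ℝ) ^ m) *
          ((1 + ((2 : ℝ) ^ m - 1) * (((1 + ρ) ^ m - 1) / ((2 : ℝ) ^ m - 1))) ^ K₀ +
            ((2 : ℝ) ^ m - 1) * (1 - ((1 + ρ) ^ m - 1) / ((2 : ℝ) ^ m - 1)) ^ K₀) *
          (1 + ((2 : ℝ) ^ m - 1) * (((1 + ρ) ^ m - 1) / ((2 : ℝ) ^ m - 1))) ^ (K - K₀)) ^ L :=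
  stmt_9_general m F hq b K K₀ L hK ρ
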